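/- arXiv:2310.16606 — 3 statements merged into one kernel-verified Lean document; each statement's English description precedes it below -/
import Mathlib

section
/- The function f(x) = (4(1−x²)/x + x)/log(1/x) is convex on the open interval (0,1). -/
/-!
Since `4 (1 - x²) / x + x = 3x - 4/x` and `log (1/x) = -log x`, the function is
`(3x - 4/x) / log x`, whose second derivative is `N(x) / (x t)³` with `t = -log x > 0` and
`N(x) = 8t² - 12t + 8 - x² (3t + 6)`. As `x² = exp (-2t)`, the numerator is nonnegative once
`3t + 6 ≤ (8t² - 12t + 8) exp (2t)`; bounding `exp (2t) ≥ 1 + 2t + 2t²` reduces this to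
`0 ≤ 16t⁴ - 8t³ + t + 2`.
-/

open Real Set

noncomputable def quotLog (x : ℝ) : ℝ := (3 * x - 4 / x) / log x

lemma quotLog_eq (x : ℝ) : quotLog x = (4 * (1 - x ^ 2) / x + x) / log (1 / x) := by
  rw [quotLog, one_div, log_inv, ← neg_div_neg_eq]
  congr 1
  rcases eq_or_ne x 0 with rfl | hx
  · simp
  · field_simp
    ring

lemma hasDerivAt_quotLog {x : ℝ} (hx : x ≠ 0) (hL : log x ≠ 0) :
    HasDerivAt quotLog (((3 + 4 / x ^ 2) * log x - (3 - 4 / x ^ 2)) / log x ^ 2) x := by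
  have hnum := ((hasDerivAt_id' x).const_mul 3).fun_sub
    ((hasDerivAt_const x (4 : ℝ)).fun_div (hasDerivAt_id' x) hx)
  refine (hnum.fun_div (hasDerivAt_log hx) hL).congr_deriv ?_
  field_simp
  ring

lemma hasDerivAt_quotLog_deriv {x : ℝ} (hx : x ≠ 0) (hL : log x ≠ 0) :
    HasDerivAt (fun y => ((3 + 4 / y ^ 2) * log y - (3 - 4 / y ^ 2)) / log y ^ 2)
      ((8 * log x ^ 2 + (12 + 3 * x ^ 2) * log x + 8 - 6 * x ^ 2) / (x * -log x) ^ 3) x := by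
  have hinvSq := (hasDerivAt_const x (4 : ℝ)).fun_div (hasDerivAt_pow 2 x) (pow_ne_zero 2 hx)
  have hlog := hasDerivAt_log hx
  have hnum := ((hinvSq.const_add 3).fun_mul hlog).fun_sub (hinvSq.const_sub 3)
  refine (hnum.fun_div (hlog.fun_pow 2) (pow_ne_zero 2 hL)).congr_deriv ?_
  field_simp
  ring

lemma three_mul_add_six_le_mul_exp {t : ℝ} (ht : 0 ≤ t) :
    3 * t + 6 ≤ (8 * t ^ 2 - 12 * t + 8) * exp (2 * t) := by
  have hexp : 1 + 2 * t + 2 * t ^ 2 ≤ exp (2 * t) := by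
    linarith [quadratic_le_exp_of_nonneg (by positivity : 0 ≤ 2 * t)]
  have hquartic : 0 ≤ 16 * t ^ 4 - 8 * t ^ 3 + t + 2 := by
    nlinarith [sq_nonneg (4 * t ^ 2 - t), sq_nonneg (2 * t - 1),
      mul_nonneg ht (sq_nonneg (2 * t - 1))]
  have hpos : 0 ≤ 8 * t ^ 2 - 12 * t + 8 := by nlinarith [sq_nonneg (t - 3 / 4)]
  calc 3 * t + 6 ≤ (8 * t ^ 2 - 12 * t + 8) * (1 + 2 * t + 2 * t ^ 2) := by nlinarith
    _ ≤ (8 * t ^ 2 - 12 * t + 8) * exp (2 * t) := by gcongr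

lemma quotLog_deriv2_numerator_nonneg {x : ℝ} (hx0 : 0 < x) (hx1 : x ≤ 1) :
    0 ≤ 8 * log x ^ 2 + (12 + 3 * x ^ 2) * log x + 8 - 6 * x ^ 2 := by
  have ht : 0 ≤ -log x := neg_nonneg.2 (log_nonpos hx0.le hx1)
  have hsq : x ^ 2 * exp (2 * -log x) = 1 := by
    rw [show 2 * -log x = -log (x ^ 2) by rw [log_pow]; push_cast; ring, exp_neg,
      exp_log (by positivity), mul_inv_cancel₀ (by positivity)]
  linear_combination mul_le_mul_of_nonneg_left (three_mul_add_six_le_mul_exp ht) (sq_nonneg x) +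
    (8 * log x ^ 2 + 12 * log x + 8) * hsq

/-- f(x) = (4(1−x²)/x + x)/log(1/x) is convex on (0,1). -/
theorem stmt_3 :
    ConvexOn ℝ (Set.Ioo (0 : ℝ) 1)
      (fun x => (4 * (1 - x ^ 2) / x + x) / Real.log (1 / x)) := by
  have hfun : (fun x : ℝ => (4 * (1 - x ^ 2) / x + x) / log (1 / x)) = quotLog :=
    funext fun x => (quotLog_eq x).symm
  have hlog_neg {x : ℝ} (hx : x ∈ Ioo (0 : ℝ) 1) : log x < 0 := log_neg hx.1 hx.2
  have hderiv {x : ℝ} (hx : x ∈ Ioo (0 : ℝ) 1) := hasDerivAt_quotLog hx.1.ne' (hlog_neg hx).ne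
  have hderiv2 {x : ℝ} (hx : x ∈ Ioo (0 : ℝ) 1) :=
    hasDerivAt_quotLog_deriv hx.1.ne' (hlog_neg hx).ne
  rw [hfun]
  refine convexOn_of_hasDerivWithinAt2_nonneg (convex_Ioo 0 1)
    (fun x hx => (hderiv hx).continuousAt.continuousWithinAt)
    (fun x hx => (hderiv (interior_subset hx)).hasDerivWithinAt)
    (fun x hx => (hderiv2 (interior_subset hx)).hasDerivWithinAt) fun x hx => ?_
  obtain ⟨hx0, hx1⟩ := interior_subset hx
  have : 0 < -log x := neg_pos.2 (log_neg hx0 hx1)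
  exact div_nonneg (quotLog_deriv2_numerator_nonneg hx0 hx1.le) (by positivity)
end

section
/- For 0 < x < 1, the expression (8(log²(1/x)+1)/x³ + (−12/x³ − 3/x)·log(1/x) − 6/x) is positive. Equivalently, setting t = log(1/x) > 0, one has 8(t²+1) + (−12 − 3x²)t − 6x² > 0 for all x ∈ (0,1) with t = log(1/x). -/
/-- For x ∈ (0,1) with t = log(1/x), one has 8t² − (12 + 3x²)t + 8 − 6x² > 0. -/
theorem stmt_6 (x : ℝ) (hx : x ∈ Set.Ioo (0 : ℝ) 1) :
    8 * (Real.log (1 / x)) ^ 2 - (12 + 3 * x ^ 2) * Real.log (1 / x)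
      + 8 - 6 * x ^ 2 > 0 := by
  obtain ⟨hx0, hx1⟩ := hx
  set t := Real.log (1 / x) with ht
  have hx0' : (0:ℝ) < 1 / x := by positivity
  have ht0 : 0 < t := Real.log_pos (by rw [lt_div_iff₀ hx0]; linarith)
  have hexp : Real.exp t = 1 / x := Real.exp_log hx0'
  have key : (1 + 2 * t) * x ^ 2 ≤ 1 := by
    have h1 : 2 * t + 1 ≤ Real.exp (2 * t) := Real.add_one_le_exp _
    have h2 : Real.exp (2 * t) = (1 / x) ^ 2 := by
      rw [two_mul, Real.exp_add, hexp]; ring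
    rw [h2] at h1
    have hx2 : 0 < x ^ 2 := by positivity
    calc (1 + 2 * t) * x ^ 2 ≤ (1 / x) ^ 2 * x ^ 2 := by nlinarith
      _ = 1 := by field_simp
  nlinarith [sq_nonneg (t - 13/20), mul_nonneg ht0.le (sq_nonneg (t - 13/20)), mul_pos ht0 ht0, sq_nonneg x, sq_nonneg (x*t)]
end

section
/- Let a_t be a nonnegative real sequence with a_0 = 0 satisfying a_{t+1} ≤ (1−λ)(√(a_t) + D)², where 0 < λ ≤ 1 and D ≥ 0. Then a_t ≤ 4(1−λ²)D²/λ² for all t ≥ 0. -/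
/-!
With `c = √(1 - λ)`, the value `Y = (2cD/λ)² = 4(1 - λ)D²/λ²` is a post-fixed point of the
monotone map `x ↦ (1 - λ)(√x + D)²`: this reduces to `c(2c + λ) ≤ 2c`, i.e. to
`√(1 - λ) ≤ 1 - λ/2`. Since `a₀ = 0 ≤ Y`, comparison with the constant sequence `Y` keeps
`aₜ ≤ Y` for all `t`, and `1 - λ ≤ 1 - λ²` for `λ ≤ 1`.
-/

open Real

theorem Real.sqrt_one_sub_le_one_sub_half {x : ℝ} (hx : x ≤ 2) : √(1 - x) ≤ 1 - x / 2 :=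
  Real.sqrt_le_iff.2 ⟨by linarith, by nlinarith [sq_nonneg x]⟩

theorem monotone_mul_sqrt_add_sq {k D : ℝ} (hk : 0 ≤ k) (hD : 0 ≤ D) :
    Monotone fun x : ℝ => k * (√x + D) ^ 2 := fun _ _ hxy => by
  have := Real.sqrt_le_sqrt hxy
  dsimp only
  gcongr

theorem one_sub_mul_sqrt_add_sq_le {lam D : ℝ} (hlam : 0 < lam) (hlam1 : lam ≤ 1) (hD : 0 ≤ D) :
    (1 - lam) * (√((2 * √(1 - lam) * D / lam) ^ 2) + D) ^ 2 ≤ (2 * √(1 - lam) * D / lam) ^ 2 := by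
  have hsqrt := Real.sqrt_one_sub_le_one_sub_half (x := lam) (by linarith)
  set c := √(1 - lam)
  have hc : 0 ≤ c := Real.sqrt_nonneg _
  have hcD : 0 ≤ c * D := mul_nonneg hc hD
  have hfixed : c * (2 * c * D / lam + D) ≤ 2 * c * D / lam := by
    rw [show c * (2 * c * D / lam + D) = c * D * (2 * c + lam) / lam by field_simp,
      div_le_div_iff_of_pos_right hlam]
    nlinarith
  rw [Real.sqrt_sq (by positivity)]
  calc (1 - lam) * (2 * c * D / lam + D) ^ 2
      = (c * (2 * c * D / lam + D)) ^ 2 := by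
        rw [mul_pow, Real.sq_sqrt (by linarith)]
    _ ≤ (2 * c * D / lam) ^ 2 := by gcongr

theorem stmt_8_general (a : ℕ → ℝ) (lam D : ℝ) (hlam0 : 0 < lam) (hlam1 : lam ≤ 1)
    (hD : 0 ≤ D) (ha0 : a 0 = 0)
    (hrec : ∀ t, a (t + 1) ≤ (1 - lam) * (Real.sqrt (a t) + D) ^ 2) :
    ∀ t, a t ≤ 4 * (1 - lam ^ 2) * D ^ 2 / lam ^ 2 := by
  intro t
  set Y := (2 * √(1 - lam) * D / lam) ^ 2
  have hY : Y = 4 * (1 - lam) * D ^ 2 / lam ^ 2 := by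
    simp only [Y]
    rw [div_pow, mul_pow, mul_pow, Real.sq_sqrt (by linarith)]
    ring
  have hstep : (1 - lam) * (√Y + D) ^ 2 ≤ Y := one_sub_mul_sqrt_add_sq_le hlam0 hlam1 hD
  have haY : a t ≤ Y := (monotone_mul_sqrt_add_sq (by linarith) hD).seq_le_seq (y := fun _ => Y) t
    (by rw [ha0]; positivity) (fun k _ => hrec k) (fun _ _ => hstep)
  calc a t ≤ 4 * (1 - lam) * D ^ 2 / lam ^ 2 := hY ▸ haY
    _ ≤ 4 * (1 - lam ^ 2) * D ^ 2 / lam ^ 2 := by gcongr; nlinarith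

/-- Scalar bounded-memory lemma: a₀ = 0, a_{t+1} ≤ (1−λ)(√a_t + D)² implies
a_t ≤ 4(1−λ²)D²/λ². -/
theorem stmt_8 (a : ℕ → ℝ) (lam D : ℝ) (hlam0 : 0 < lam) (hlam1 : lam ≤ 1)
    (hD : 0 ≤ D) (ha : ∀ t, 0 ≤ a t) (ha0 : a 0 = 0)
    (hrec : ∀ t, a (t + 1) ≤ (1 - lam) * (Real.sqrt (a t) + D) ^ 2) :
    ∀ t, a t ≤ 4 * (1 - lam ^ 2) * D ^ 2 / lam ^ 2 :=
  stmt_8_general a lam D hlam0 hlam1 hD ha0 hrec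
end
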